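/- arXiv:2212.07062 — 3 statements merged into one kernel-verified Lean document; each statement's English description precedes it below -/
import Mathlib

section
/- Let k be a field of characteristic p > 0, G a finite group, M a kG-module, and R a normal p-subgroup of G acting trivially on M. Let Q ≤ G and K < Q a subgroup with (Q ∩ R) ⊄ K. Then the relative trace map tr_K^Q : M^K → M^Q is the zero map. -/
variable {k V G : Type*} [Field k] [AddCommGroup V] [Module k V] [Group G]

/-- The subspace of `H`-fixed points `M^H` of a representation `M`. -/
def fixedSub (ρ : Representation k G V) (H : Subgroup G) : Submodule k V where
  carrier := {v | ∀ h ∈ H, ρ h v = v}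
  add_mem' := by intro a b ha hb h hh; simp [map_add, ha h hh, hb h hh]
  zero_mem' := by intro h hh; simp
  smul_mem' := by intro c v hv h hh; rw [LinearMap.map_smul, hv h hh]

/-- The relative trace map `tr_K^H : m ↦ Σ_{g ∈ [H/K]} g·m`, defined via a choice of
left coset representatives of `K` in `H` (on `K`-fixed points it is independent of
this choice). -/
noncomputable def relTrace [Finite G] (ρ : Representation k G V) (K H : Subgroup G) :
    V →ₗ[k] V :=
  letI : Fintype (H ⧸ K.subgroupOf H) := Fintype.ofFinite _
  ∑ x : H ⧸ K.subgroupOf H, ρ (x.out : G)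

/-- Let `k` be a field of characteristic `p > 0`, `G` a finite group, `M` a `kG`-module
and `R ⊴ G` a normal `p`-subgroup acting trivially on `M`. If `Q ≤ G` and `K < Q` with
`(Q ∩ R) ⊄ K`, then `tr_K^Q : M^K → M^Q` is the zero map. -/
theorem scott_trace_zero_of_QR_not_le {p : ℕ} (hp : p.Prime) [CharP k p] [Finite G]
    (ρ : Representation k G V) (R : Subgroup G) (hRn : R.Normal) (hRp : IsPGroup p R)
    (htriv : ∀ r ∈ R, ∀ v : V, ρ r v = v)
    (Q K : Subgroup G) (hK1 : ¬ Q ⊓ R ≤ K) (hK2 : K < Q) :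
    ∀ v ∈ fixedSub ρ K, relTrace ρ K Q v = 0 := by
  classical
  intro v hv
  set K' := K.subgroupOf Q with hK'def
  set P := (Q ⊓ R).subgroupOf Q with hPdef
  haveI : Fact p.Prime := ⟨hp⟩
  have hPp : IsPGroup p P :=
    ((hRp.to_le inf_le_right).of_equiv (Subgroup.subgroupOfEquivOfLe
      (inf_le_left : Q ⊓ R ≤ Q)).symm)
  -- Lemma A: multiplying by R on the left and K on the right doesn't change the value on v
  have hA : ∀ (g r c : G), r ∈ R → c ∈ K → ρ (r * g * c) v = ρ g v := by
    intro g r c hr hc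
    have h1 : ρ c v = v := hv c hc
    have h2 : ρ (g⁻¹ * r * g) v = v := htriv _ (by simpa using hRn.conj_mem' r hr g) v
    have : r * g * c = g * ((g⁻¹ * r * g) * c) := by group
    rw [this, map_mul, map_mul, Module.End.mul_apply, Module.End.mul_apply, h1]
    have h2' : ρ (g⁻¹ * r * g) v = v := h2
    rw [h2']
  -- Lemma B: the summand is constant on P-orbits
  have hB : ∀ x y : Q ⧸ K', MulAction.orbitRel P (Q ⧸ K') x y →
      ρ (x.out : G) v = ρ (y.out : G) v := by
    intro x y hxy
    rw [MulAction.orbitRel_apply] at hxy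
    obtain ⟨r, hr⟩ := hxy
    have hx : (QuotientGroup.mk ((r : Q) * y.out) : Q ⧸ K') = QuotientGroup.mk x.out := by
      rw [QuotientGroup.out_eq', ← hr]
      conv_rhs => rw [← QuotientGroup.out_eq' y]
      rfl
    have hc : ((r : Q) * y.out)⁻¹ * x.out ∈ K' := QuotientGroup.eq.mp hx
    set c : Q := ((r : Q) * y.out)⁻¹ * x.out with hcdef
    have hxo : (x.out : Q) = (r : Q) * y.out * c := by rw [hcdef]; group
    have hxoG : (x.out : G) = ((r : Q) : G) * ((y.out : Q) : G) * (c : G) := by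
      rw [hxo]; push_cast; ring_nf
    rw [hxoG]
    exact hA _ _ _ ((Subgroup.mem_subgroupOf.mp r.2).2) (Subgroup.mem_subgroupOf.mp hc)
  -- no orbit is trivial
  have hfree : ∀ ω : MulAction.orbitRel.Quotient P (Q ⧸ K'),
      ¬ (∀ r : P, r • (ω.out) = ω.out) := by
    intro ω hfix
    apply hK1
    intro s hs
    set x := ω.out
    set q : Q := x.out with hq
    have hrQ : (q : G) * s * (q : G)⁻¹ ∈ Q ⊓ R := by
      constructor
      · exact Q.mul_mem (Q.mul_mem q.2 hs.1) (Q.inv_mem q.2)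
      · exact hRn.conj_mem s hs.2 q
    set s' : Q := ⟨s, hs.1⟩ with hs'
    have hrP : q * s' * q⁻¹ ∈ P := by
      rw [hPdef, Subgroup.mem_subgroupOf]
      exact hrQ
    have hfx := hfix ⟨q * s' * q⁻¹, hrP⟩
    have hmk : ((⟨q * s' * q⁻¹, hrP⟩ : P) • x : Q ⧸ K') =
        QuotientGroup.mk (q * s' * q⁻¹ * x.out) := by
      conv_lhs => rw [← QuotientGroup.out_eq' x]
      rfl
    have : (QuotientGroup.mk (q * s' * q⁻¹ * x.out) : Q ⧸ K') = QuotientGroup.mk x.out := by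
      rw [← hmk, hfx, QuotientGroup.out_eq']
    have hmem : (q * s' * q⁻¹ * x.out)⁻¹ * x.out ∈ K' := QuotientGroup.eq.mp this
    have hsimp : (q * s' * q⁻¹ * x.out)⁻¹ * x.out = s'⁻¹ := by rw [← hq]; group
    rw [hsimp] at hmem
    have : s'⁻¹ ∈ K' := hmem
    have hsK : s⁻¹ ∈ K := Subgroup.mem_subgroupOf.mp this
    simpa using inv_mem hsK
  -- main computation
  letI : Fintype (Q ⧸ K') := Fintype.ofFinite _
  rw [relTrace]
  rw [LinearMap.sum_apply]
  rw [← Fintype.sum_fiberwise (Quotient.mk'' : Q ⧸ K' → MulAction.orbitRel.Quotient P (Q ⧸ K'))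
    (fun x : Q ⧸ K' => ρ (x.out : G) v)]
  refine Finset.sum_eq_zero fun ω _ => ?_
  have hconst : ∀ a : {x : Q ⧸ K' // Quotient.mk'' x = ω},
      ρ (((a : Q ⧸ K').out : Q) : G) v = ρ ((ω.out).out : G) v := by
    intro a
    apply hB
    apply Quotient.exact'
    rw [a.2]
    exact (Quotient.out_eq' ω).symm
  rw [Fintype.sum_congr _ _ hconst]
  rw [Finset.sum_const, Finset.card_univ]
  have hcard : ∃ n : ℕ, Fintype.card {x : Q ⧸ K' // Quotient.mk'' x = ω} = p ^ n := by
    obtain ⟨n, hn⟩ := hPp.card_orbit (ω.out)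
    refine ⟨n, ?_⟩
    rw [← Nat.card_eq_fintype_card, ← hn]
    apply Nat.card_congr
    apply Equiv.subtypeEquivRight
    intro x
    rw [← MulAction.orbitRel.Quotient.orbit_eq_orbit_out ω Quotient.out_eq',
      MulAction.orbitRel.Quotient.mem_orbit]
  obtain ⟨n, hn⟩ := hcard
  have hne : Fintype.card {x : Q ⧸ K' // Quotient.mk'' x = ω} ≠ 1 := by
    intro h1
    apply hfree ω
    intro r
    have hωmem : Quotient.mk'' (ω.out) = ω := Quotient.out_eq' ω
    have hrmem : Quotient.mk'' (r • ω.out) = ω := by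
      conv_rhs => rw [← hωmem]
      exact Quotient.sound' (MulAction.orbitRel_apply.mpr (MulAction.mem_orbit _ r))
    have := Fintype.card_le_one_iff.mp (by omega : Fintype.card {x : Q ⧸ K' // Quotient.mk'' x = ω} ≤ 1)
      ⟨r • ω.out, hrmem⟩ ⟨ω.out, hωmem⟩
    exact congrArg Subtype.val this
  have hdvd : p ∣ Fintype.card {x : Q ⧸ K' // Quotient.mk'' x = ω} := by
    rw [hn]
    rcases Nat.eq_zero_or_pos n with h0 | h0
    · exfalso; rw [h0, pow_zero] at hn; exact hne hn
    · exact dvd_pow_self p (by omega)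
  rw [← Nat.cast_smul_eq_nsmul k]
  rw [(CharP.cast_eq_zero_iff k p _).mpr hdvd, zero_smul]
end

section
/- Let k be a field of characteristic p > 0, G a finite group, M a kG-module, and R a normal p-subgroup of G acting trivially on M. Let Q ≤ G and K a subgroup with (Q ∩ R) ≤ K < Q. Then tr_K^Q(M^K) = tr_{KR}^{QR}(M^{KR}) as subspaces of M. -/
variable {k V G : Type*} [Field k] [AddCommGroup V] [Module k V] [Group G]

open scoped Pointwise

/-- Let `k` be a field of characteristic `p > 0`, `G` a finite group, `M` a `kG`-module
and `R ⊴ G` a normal `p`-subgroup acting trivially on `M`. If `(Q ∩ R) ≤ K < Q`, then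
`tr_K^Q(M^K) = tr_{KR}^{QR}(M^{KR})` as subspaces of `M`. -/
theorem scott_trace_image_eq {p : ℕ} (hp : p.Prime) [CharP k p] [Finite G]
    (ρ : Representation k G V) (R : Subgroup G) (hRn : R.Normal) (hRp : IsPGroup p R)
    (htriv : ∀ r ∈ R, ∀ v : V, ρ r v = v)
    (Q K : Subgroup G) (h1 : Q ⊓ R ≤ K) (h2 : K < Q) :
    Submodule.map (relTrace ρ K Q) (fixedSub ρ K)
      = Submodule.map (relTrace ρ (K ⊔ R) (Q ⊔ R)) (fixedSub ρ (K ⊔ R)) := by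
  classical
  have hfix : ∀ v : V, (∀ h ∈ K, ρ h v = v) → ∀ g ∈ K ⊔ R, ρ g v = v := by
    intro v hv
    let S : Subgroup G :=
      { carrier := {g | ρ g v = v}
        one_mem' := by simp
        mul_mem' := by
          intro a b ha hb
          simp only [Set.mem_setOf_eq] at *
          rw [map_mul, Module.End.mul_apply, hb, ha]
        inv_mem' := by
          intro a ha
          simp only [Set.mem_setOf_eq] at *
          conv_lhs => rw [← ha]
          rw [← Module.End.mul_apply, ← map_mul, inv_mul_cancel, map_one,
            Module.End.one_apply] }
    have hS : K ⊔ R ≤ S := sup_le (fun g hg => hv g hg) (fun r hr => htriv r hr v)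
    exact fun g hg => hS hg
  have hfixEq : fixedSub ρ K = fixedSub ρ (K ⊔ R) := by
    apply le_antisymm
    · intro v hv g hg; exact hfix v hv g hg
    · intro v hv g hg; exact hv g (Subgroup.mem_sup_left hg)
  have hinf : ∀ g : G, g ∈ Q → g ∈ K ⊔ R → g ∈ K := by
    intro g hgQ hgKR
    haveI := hRn
    have hm : g ∈ ((K : Set G) * (R : Set G)) := by
      rw [← Subgroup.mul_normal K R]; exact hgKR
    rw [Set.mem_mul] at hm
    obtain ⟨a, ha, b, hb, hab⟩ := hm
    have hbQ : b ∈ Q := by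
      have hb' : b = a⁻¹ * g := by rw [← hab]; group
      rw [hb']; exact mul_mem (inv_mem (h2.le ha)) hgQ
    have hbK : b ∈ K := h1 ⟨hbQ, hb⟩
    rw [← hab]; exact mul_mem ha hbK
  letI : Fintype (Q ⧸ K.subgroupOf Q) := Fintype.ofFinite _
  letI : Fintype ((Q ⊔ R : Subgroup G) ⧸ (K ⊔ R).subgroupOf (Q ⊔ R)) := Fintype.ofFinite _
  let f : Q → (Q ⊔ R : Subgroup G) := fun q => ⟨(q : G), Subgroup.mem_sup_left q.2⟩
  have hrel : ∀ a b : Q, (QuotientGroup.leftRel (K.subgroupOf Q)) a b →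
      (QuotientGroup.leftRel ((K ⊔ R).subgroupOf (Q ⊔ R))) (f a) (f b) := by
    intro a b hab
    rw [QuotientGroup.leftRel_apply] at hab ⊢
    rw [Subgroup.mem_subgroupOf] at hab ⊢
    exact Subgroup.mem_sup_left hab
  let φ : (Q ⧸ K.subgroupOf Q) → ((Q ⊔ R : Subgroup G) ⧸ (K ⊔ R).subgroupOf (Q ⊔ R)) :=
    Quotient.map' f hrel
  have hbij : Function.Bijective φ := by
    constructor
    · intro x y hxy
      induction x using Quotient.inductionOn' with | h a =>
      induction y using Quotient.inductionOn' with | h b =>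
      have hr2 : (QuotientGroup.leftRel ((K ⊔ R).subgroupOf (Q ⊔ R))) (f a) (f b) :=
        Quotient.exact' hxy
      rw [QuotientGroup.leftRel_apply, Subgroup.mem_subgroupOf] at hr2
      apply Quotient.sound'
      rw [QuotientGroup.leftRel_apply, Subgroup.mem_subgroupOf]
      exact hinf _ (mul_mem (inv_mem a.2) b.2) hr2
    · intro y
      induction y using Quotient.inductionOn' with | h b =>
      haveI := hRn
      have hm : (b : G) ∈ ((Q : Set G) * (R : Set G)) := by
        rw [← Subgroup.mul_normal Q R]; exact b.2
      rw [Set.mem_mul] at hm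
      obtain ⟨a, ha, r, hr, har⟩ := hm
      refine ⟨Quotient.mk'' ⟨a, ha⟩, ?_⟩
      apply Quotient.sound'
      rw [QuotientGroup.leftRel_apply, Subgroup.mem_subgroupOf]
      show (a⁻¹ * (b : G)) ∈ K ⊔ R
      have hae : a⁻¹ * (b : G) = r := by rw [← har]; group
      rw [hae]; exact Subgroup.mem_sup_right hr
  have hkey : ∀ v ∈ fixedSub ρ K, relTrace ρ K Q v = relTrace ρ (K ⊔ R) (Q ⊔ R) v := by
    intro v hv
    have hval : ∀ g h : G, g⁻¹ * h ∈ K ⊔ R → ρ g v = ρ h v := by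
      intro g h hgh
      have e : h = g * (g⁻¹ * h) := by group
      rw [e, map_mul, Module.End.mul_apply, hfix v hv _ hgh]
    show (∑ x : Q ⧸ K.subgroupOf Q, ρ ((x.out : Q) : G)) v
        = (∑ y : (Q ⊔ R : Subgroup G) ⧸ (K ⊔ R).subgroupOf (Q ⊔ R), ρ ((y.out : _) : G)) v
    rw [LinearMap.sum_apply, LinearMap.sum_apply]
    refine Fintype.sum_bijective φ hbij _ _ ?_
    intro x
    have hx : (Quotient.mk'' ((φ x).out) :
        (Q ⊔ R : Subgroup G) ⧸ (K ⊔ R).subgroupOf (Q ⊔ R)) = Quotient.mk'' (f x.out) := by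
      rw [Quotient.out_eq']
      conv_lhs => rw [← Quotient.out_eq' x]
      exact Quotient.map'_mk'' f hrel _
    have hr2 := Quotient.exact' hx
    rw [QuotientGroup.leftRel_apply, Subgroup.mem_subgroupOf] at hr2
    have : ρ (((φ x).out : _) : G) v = ρ ((f x.out : _) : G) v := by
      apply hval
      simpa using hr2
    exact this.symm
  rw [← hfixEq]
  ext x
  simp only [Submodule.mem_map]
  constructor
  · rintro ⟨v, hv, rfl⟩; exact ⟨v, hv, (hkey v hv).symm⟩
  · rintro ⟨v, hv, rfl⟩; exact ⟨v, hv, hkey v hv⟩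
end

section
/- Let k be a field of characteristic p > 0, G a finite group, M a kG-module, and R a normal p-subgroup of G acting trivially on M. Let Q ≤ G. Then Σ_{K < Q} tr_K^Q(M^K) = Σ_{H < QR} tr_H^{QR}(M^H), where both sums run over all proper subgroups, as subspaces of M^Q = M^{QR}. -/
variable {k V G : Type*} [Field k] [AddCommGroup V] [Module k V] [Group G]

/-- The sum `Σ_{T < S} tr_T^S(M^T)` of the images of the relative traces from all
proper subgroups of `S`. -/
noncomputable def traceSum [Finite G] (ρ : Representation k G V) (S : Subgroup G) :
    Submodule k V :=
  ⨆ T : {T : Subgroup G // T < S}, Submodule.map (relTrace ρ T.1 S) (fixedSub ρ T.1)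

/-- The Brauer quotient (Brauer construction) `M(S) = M^S / Σ_{T<S} tr_T^S(M^T)`
as a `k`-vector space. -/
noncomputable abbrev BrauerQuotient [Finite G] (ρ : Representation k G V) (S : Subgroup G) :=
  (fixedSub ρ S) ⧸ ((traceSum ρ S).comap (fixedSub ρ S).subtype)

/-! If `K ≤ Q` fixes `m`, then so does `KR`, because `R` acts trivially. On `M^{KR}`,
transitivity of the trace gives `tr_K^Q = [KR ∩ Q : K] • tr_{KR ∩ Q}^Q`, and since
`QR = Q·KR` the cosets of `KR ∩ Q` in `Q` are exactly those of `KR` in `QR`, so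
`tr_{KR ∩ Q}^Q = tr_{KR}^{QR}`. Symmetrically, `tr_T^{QR} = [TR : T] • tr_{TR ∩ Q}^Q` on `M^T`.
Hence each generator of one sum is a multiple of a generator of the other, except when the
intermediate subgroup is the whole group; then `KR = QR` (resp. `TR = QR`) and the multiplier
is an index `[H : K]` with `K < H`, `KR = HR`, which equals the nontrivial `p`-power
`[H ∩ R : K ∩ R]` and so vanishes in `k`. -/

open Pointwise

theorem prime_dvd_relIndex_of_sup_eq_sup [Finite G] {p : ℕ} [Fact p.Prime]
    {R K H : Subgroup G} [R.Normal] (hR : IsPGroup p R) (hKH : K < H)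
    (hsup : K ⊔ R = H ⊔ R) : p ∣ K.relIndex H := by
  -- `[K : K ⊓ R] = [KR : R] = [HR : R] = [H : H ⊓ R]`, and both sides are `[H : K ⊓ R]`
  have hcancel : K.relIndex H * R.relIndex H = (K ⊓ R).relIndex (H ⊓ R) * R.relIndex H :=
    calc K.relIndex H * R.relIndex H = (R ⊓ K).relIndex K * K.relIndex H := by
          rw [Subgroup.inf_relIndex_right, ← Subgroup.relIndex_sup_right H R, ← hsup,
            Subgroup.relIndex_sup_right, mul_comm]
      _ = (K ⊓ R).relIndex (H ⊓ R) * (R ⊓ H).relIndex H := by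
          rw [Subgroup.relIndex_mul_relIndex _ _ _ inf_le_right hKH.le, inf_comm R H,
            Subgroup.relIndex_mul_relIndex _ _ _ (inf_le_inf_right R hKH.le) inf_le_left,
            inf_comm]
      _ = _ := by rw [Subgroup.inf_relIndex_right]
  have hidx : K.relIndex H = (K ⊓ R).relIndex (H ⊓ R) :=
    Nat.eq_of_mul_eq_mul_right
      (Nat.pos_of_ne_zero (Subgroup.FiniteIndex.index_ne_zero (H := R.subgroupOf H))) hcancel
  obtain ⟨n, hn⟩ :=
    (hR.to_le inf_le_right : IsPGroup p ↥(H ⊓ R)).index ((K ⊓ R).subgroupOf (H ⊓ R))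
  have hn0 : n ≠ 0 := by
    rintro rfl
    exact hKH.not_ge (Subgroup.relIndex_eq_one.mp (hidx.trans hn))
  rw [hidx, Subgroup.relIndex, hn]
  exact dvd_pow_self p hn0

section FixedPoints

variable (ρ : Representation k G V)

lemma fixedSub_anti {K L : Subgroup G} (h : K ≤ L) : fixedSub ρ L ≤ fixedSub ρ K :=
  fun _ hv g hg => hv g (h hg)

lemma mem_fixedSub_sup {A B : Subgroup G} {v : V} (ha : v ∈ fixedSub ρ A)
    (hb : v ∈ fixedSub ρ B) : v ∈ fixedSub ρ (A ⊔ B) :=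
  (sup_le ha hb : A ⊔ B ≤ (MulAction.stabilizer (V →ₗ[k] V)ˣ v).comap ρ.asGroupHom)

lemma apply_out_mk_of_mem_fixedSub {K H : Subgroup G} {m : V} (hm : m ∈ fixedSub ρ K) (h : H) :
    ρ ((QuotientGroup.mk h : H ⧸ K.subgroupOf H).out : G) m = ρ h m := by
  obtain ⟨⟨l, hl⟩, hout⟩ := QuotientGroup.mk_out_eq_mul (K.subgroupOf H) h
  rw [hout, Subgroup.coe_mul, map_mul, Module.End.mul_apply, hm _ (Subgroup.mem_subgroupOf.mp hl)]

end FixedPoints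

section RelTrace

variable [Finite G] (ρ : Representation k G V)

lemma relTrace_apply (K H : Subgroup G) (m : V) :
    letI : Fintype (H ⧸ K.subgroupOf H) := Fintype.ofFinite _
    relTrace ρ K H m = ∑ x : H ⧸ K.subgroupOf H, ρ (x.out : G) m := by
  simp only [relTrace, LinearMap.sum_apply]

lemma relTrace_inf_right (K H : Subgroup G) : relTrace ρ (K ⊓ H) H = relTrace ρ K H :=
  congrArg (fun S : Subgroup H => letI := Fintype.ofFinite (H ⧸ S); ∑ x : H ⧸ S, ρ (x.out : G))
    (Subgroup.inf_subgroupOf_right K H)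

lemma relTrace_eq_relIndex_smul {K L H : Subgroup G} (hKL : K ≤ L) (hLH : L ≤ H) {m : V}
    (hm : m ∈ fixedSub ρ L) : relTrace ρ K H m = K.relIndex L • relTrace ρ L H m := by
  let : Fintype (H ⧸ K.subgroupOf H) := Fintype.ofFinite _
  let : Fintype (H ⧸ L.subgroupOf H) := Fintype.ofFinite _
  let : Fintype (L.subgroupOf H ⧸ (K.subgroupOf H).subgroupOf (L.subgroupOf H)) :=
    Fintype.ofFinite _
  let e := Subgroup.quotientEquivProdOfLE (Subgroup.subgroupOf_mono H hKL)
  have he : ∀ x, ρ (x.out : G) m = ρ (((e x).1.out : H) : G) m := by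
    intro x
    induction x using QuotientGroup.induction_on with | H h => ?_
    rw [apply_out_mk_of_mem_fixedSub ρ (fixedSub_anti ρ hKL hm)]
    exact (apply_out_mk_of_mem_fixedSub ρ hm h).symm
  rw [relTrace_apply, relTrace_apply, Fintype.sum_equiv e _ (fun z => ρ ((z.1.out : H) : G) m) he,
    Fintype.sum_prod_type, ← Subgroup.relIndex_subgroupOf hLH, Subgroup.relIndex,
    Subgroup.index_eq_card, Nat.card_eq_fintype_card, ← Finset.sum_nsmul]
  simp only [Finset.sum_const, Finset.card_univ]

lemma relTrace_eq_of_subset_mul {K H₁ H₂ : Subgroup G} (h12 : H₁ ≤ H₂)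
    (hcov : (H₂ : Set G) ⊆ (H₁ : Set G) * K) {m : V} (hm : m ∈ fixedSub ρ K) :
    relTrace ρ K H₂ m = relTrace ρ K H₁ m := by
  let : Fintype (H₁ ⧸ K.subgroupOf H₁) := Fintype.ofFinite _
  let : Fintype (H₂ ⧸ K.subgroupOf H₂) := Fintype.ofFinite _
  let f := Subgroup.quotientSubgroupOfEmbeddingOfLE K h12
  have hf : Function.Bijective f := by
    refine ⟨f.injective, fun x => ?_⟩
    induction x using QuotientGroup.induction_on with | H g => ?_
    obtain ⟨q, hq, l, hl, hql⟩ := hcov g.2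
    refine ⟨QuotientGroup.mk ⟨q, hq⟩, ?_⟩
    rw [Subgroup.quotientSubgroupOfEmbeddingOfLE_apply_mk, QuotientGroup.eq,
      Subgroup.mem_subgroupOf]
    simpa [← hql] using hl
  rw [relTrace_apply, relTrace_apply]
  refine (Fintype.sum_bijective f hf _ _ fun y => ?_).symm
  induction y using QuotientGroup.induction_on with | H h => ?_
  rw [apply_out_mk_of_mem_fixedSub ρ hm, Subgroup.quotientSubgroupOfEmbeddingOfLE_apply_mk,
    apply_out_mk_of_mem_fixedSub ρ hm]
  rfl

lemma relTrace_sup_normal_eq {R L : Subgroup G} [R.Normal] (Q : Subgroup G) (hRL : R ≤ L)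
    {m : V} (hm : m ∈ fixedSub ρ L) : relTrace ρ L (Q ⊔ R) m = relTrace ρ (L ⊓ Q) Q m := by
  rw [relTrace_inf_right]
  refine relTrace_eq_of_subset_mul ρ le_sup_left ?_ hm
  rw [Subgroup.mul_normal]
  exact Set.mul_subset_mul_left hRL

end RelTrace

section TraceSum

variable [Finite G] (ρ : Representation k G V)

lemma nsmul_relTrace_mem_traceSum {p : ℕ} [CharP k p] {L S : Subgroup G} (hLS : L ≤ S) {n : ℕ}
    (hn : L = S → p ∣ n) {m : V} (hm : m ∈ fixedSub ρ L) :
    n • relTrace ρ L S m ∈ traceSum ρ S := by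
  rw [← Nat.cast_smul_eq_nsmul k]
  rcases hLS.lt_or_eq with hlt | heq
  · exact Submodule.smul_mem _ _ (Submodule.mem_iSup_of_mem ⟨L, hlt⟩ ⟨m, hm, rfl⟩)
  · rw [(CharP.cast_eq_zero_iff k p n).mpr (hn heq), zero_smul]
    exact Submodule.zero_mem _

variable {p : ℕ} [Fact p.Prime] [CharP k p] {R : Subgroup G} [R.Normal]

lemma traceSum_le_traceSum_sup (hR : IsPGroup p R) (htriv : ∀ r ∈ R, ∀ v : V, ρ r v = v)
    (Q : Subgroup G) : traceSum ρ Q ≤ traceSum ρ (Q ⊔ R) := by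
  refine iSup_le fun ⟨K, hKQ⟩ => ?_
  rintro _ ⟨m, hm, rfl⟩
  have hmKR : m ∈ fixedSub ρ (K ⊔ R) := mem_fixedSub_sup ρ hm fun r hr => htriv r hr m
  rw [relTrace_eq_relIndex_smul ρ (le_inf le_sup_left hKQ.le) inf_le_right
    (fixedSub_anti ρ inf_le_left hmKR), ← relTrace_sup_normal_eq ρ Q le_sup_right hmKR]
  refine nsmul_relTrace_mem_traceSum ρ (sup_le_sup_right hKQ.le R) (fun hsup => ?_) hmKR
  rw [hsup, inf_eq_right.mpr le_sup_left]
  exact prime_dvd_relIndex_of_sup_eq_sup hR hKQ hsup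

lemma traceSum_sup_le_traceSum (hR : IsPGroup p R) (htriv : ∀ r ∈ R, ∀ v : V, ρ r v = v)
    (Q : Subgroup G) : traceSum ρ (Q ⊔ R) ≤ traceSum ρ Q := by
  refine iSup_le fun ⟨T, hT⟩ => ?_
  rintro _ ⟨m, hm, rfl⟩
  have hmTR : m ∈ fixedSub ρ (T ⊔ R) := mem_fixedSub_sup ρ hm fun r hr => htriv r hr m
  rw [relTrace_eq_relIndex_smul ρ le_sup_left (sup_le hT.le le_sup_right) hmTR,
    relTrace_sup_normal_eq ρ Q le_sup_right hmTR]
  refine nsmul_relTrace_mem_traceSum ρ inf_le_right (fun hinf => ?_)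
    (fixedSub_anti ρ inf_le_left hmTR)
  have hsup : T ⊔ R = Q ⊔ R :=
    le_antisymm (sup_le hT.le le_sup_right) (sup_le (hinf ▸ inf_le_left) le_sup_right)
  rw [hsup]
  exact prime_dvd_relIndex_of_sup_eq_sup hR hT (by rw [hsup, sup_assoc, sup_idem])

end TraceSum

/-- Let `k` be a field of characteristic `p > 0`, `G` a finite group, `M` a `kG`-module
and `R ⊴ G` a normal `p`-subgroup acting trivially on `M`. Then for `Q ≤ G`,
`Σ_{K < Q} tr_K^Q(M^K) = Σ_{H < QR} tr_H^{QR}(M^H)`, both sums over all proper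
subgroups, as subspaces of `M^Q = M^{QR}`. -/
theorem scott_traceSum_eq {p : ℕ} (hp : p.Prime) [CharP k p] [Finite G]
    (ρ : Representation k G V) (R : Subgroup G) (hRn : R.Normal) (hRp : IsPGroup p R)
    (htriv : ∀ r ∈ R, ∀ v : V, ρ r v = v) (Q : Subgroup G) :
    traceSum ρ Q = traceSum ρ (Q ⊔ R) := by
  have : Fact p.Prime := ⟨hp⟩
  exact le_antisymm (traceSum_le_traceSum_sup ρ hRp htriv Q)
    (traceSum_sup_le_traceSum ρ hRp htriv Q)
end
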